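/- Let α > 0, let θ_1, …, θ_L be i.i.d. real random variables uniformly distributed on [−α, α], let X_1, …, X_L and, for each i in a finite index set I, Y_{i,1}, …, Y_{i,L} be square-integrable complex random variables such that the vector (θ_1, …, θ_L) is independent of the collection of all X_l and Y_{i,l}, and let σ² > 0. Then, with ν̃ = (sin(α)/α)², the hardening-bound SINR | Σ_l E[e^{iθ_l} X_l] |² / ( Σ_{i∈I} E[ |Σ_l e^{iθ_l} Y_{i,l}|² ] − | Σ_l E[e^{iθ_l} X_l] |² + σ² ) equals ν̃ · |Σ_l E[X_l]|² / ( Σ_{i∈I} ( ν̃ · E[|Σ_l Y_{i,l}|²] + (1−ν̃) · Σ_l E[|Y_{i,l}|²] ) − ν̃ · |Σ_l E[X_l]|² + σ² ), provided the common denominator is nonzero. -/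

import Mathlib

/-!
Given the channels, the phases factor out of every expectation. Since
`E[e^{iθ}] = sin α / α =: ν`, each desired term `E[e^{iθ_l} X_l]` equals `ν E[X_l]`. Expanding
`|Σ_l e^{iθ_l} Y_{i,l}|²` into cross terms, `E[e^{iθ_l} e^{-iθ_m}]` is `1` on the diagonal and `ν²`
off it, i.e. `ν² + (1 - ν²) δ_{lm}`, so the interference power is
`ν² E|Σ_l Y_{i,l}|² + (1 - ν²) Σ_l E|Y_{i,l}|²`. The two SINR expressions then agree term by term.
-/

open MeasureTheory Set ProbabilityTheory

/-- The uniform probability measure on the interval `[-a, a]`. -/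
noncomputable def uniformIcc (a : ℝ) : Measure ℝ :=
  (volume (Icc (-a) a))⁻¹ • volume.restrict (Icc (-a) a)

open Complex
open scoped ComplexConjugate

lemma integral_uniformIcc_exp_mul_I {α : ℝ} (hα : 0 < α) :
    ∫ t, cexp (t * I) ∂uniformIcc α = ((Real.sin α / α : ℝ) : ℂ) := by
  rw [uniformIcc, integral_smul_measure, integral_Icc_eq_integral_Ioc,
    ← intervalIntegral.integral_of_le (by linarith), integral_exp_mul_I_eq_sin, Real.volume_Icc,
    ENNReal.toReal_inv, ENNReal.toReal_ofReal (by linarith), Complex.real_smul]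
  push_cast
  field_simp
  ring

section SecondMoment

variable {Ω κ : Type*} [MeasurableSpace Ω] {μ : Measure Ω}

lemma ofReal_integral_norm_sum_sq [Fintype κ] {f : κ → Ω → ℂ} (hf : ∀ l, MemLp (f l) 2 μ) :
    ((∫ ω, ‖∑ l, f l ω‖ ^ 2 ∂μ : ℝ) : ℂ) = ∑ l, ∑ m, ∫ ω, f l ω * conj (f m ω) ∂μ := by
  have hint (l m : κ) : Integrable (fun ω => f l ω * conj (f m ω)) μ :=
    (hf l).integrable_mul (hf m).star
  rw [← integral_complex_ofReal]
  simp_rw [ofReal_pow, ← mul_conj', map_sum, Finset.sum_mul_sum]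
  rw [integral_finsetSum _ fun l _ => integrable_finsetSum _ fun m _ => hint l m]
  exact Finset.sum_congr rfl fun l _ => integral_finsetSum _ fun m _ => hint l m

variable [IsProbabilityMeasure μ] {U : κ → Ω → ℂ} {c : ℂ}

lemma integral_mul_conj_eq_of_pairwise_indepFun [DecidableEq κ]
    (hU_norm : ∀ l ω, ‖U l ω‖ = 1) (hU_meas : ∀ l, AEStronglyMeasurable (U l) μ)
    (hU_indep : Pairwise fun l m => IndepFun (U l) (U m) μ) (hU_mean : ∀ l, ∫ ω, U l ω ∂μ = c)
    (l m : κ) :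
    ∫ ω, U l ω * conj (U m ω) ∂μ = ‖c‖ ^ 2 + (1 - ‖c‖ ^ 2) * if l = m then 1 else 0 := by
  rcases eq_or_ne l m with rfl | hlm
  · simp [mul_conj', hU_norm]
  · have h := ((hU_indep hlm).comp measurable_id continuous_conj.measurable
      ).integral_fun_mul_eq_mul_integral (hU_meas l)
      (continuous_conj.comp_aestronglyMeasurable (hU_meas m))
    simp only [Function.comp_apply, id_eq] at h
    simp [h, integral_conj, hU_mean, mul_conj', hlm]

theorem integral_norm_sum_mul_sq_of_indepFun [Fintype κ]
    (hU_norm : ∀ l ω, ‖U l ω‖ = 1) (hU_meas : ∀ l, AEStronglyMeasurable (U l) μ)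
    (hU_indep : Pairwise fun l m => IndepFun (U l) (U m) μ) (hU_mean : ∀ l, ∫ ω, U l ω ∂μ = c)
    {Y : κ → Ω → ℂ} (hY : ∀ l, MemLp (Y l) 2 μ)
    (hUY : IndepFun (fun ω l => U l ω) (fun ω l => Y l ω) μ) :
    ∫ ω, ‖∑ l, U l ω * Y l ω‖ ^ 2 ∂μ
      = ‖c‖ ^ 2 * ∫ ω, ‖∑ l, Y l ω‖ ^ 2 ∂μ + (1 - ‖c‖ ^ 2) * ∑ l, ∫ ω, ‖Y l ω‖ ^ 2 ∂μ := by
  classical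
  have hUY_memLp (l : κ) : MemLp (fun ω => U l ω * Y l ω) 2 μ :=
    (hY l).mul (memLp_top_of_bound (hU_meas l) 1 (.of_forall fun ω => (hU_norm l ω).le))
  have hsplit (l m : κ) : ∫ ω, U l ω * Y l ω * conj (U m ω * Y m ω) ∂μ
      = (∫ ω, U l ω * conj (U m ω) ∂μ) * ∫ ω, Y l ω * conj (Y m ω) ∂μ := by
    have hind := hUY.comp (φ := fun u => u l * conj (u m)) (ψ := fun y => y l * conj (y m))
      (by fun_prop) (by fun_prop)
    have h := hind.integral_fun_mul_eq_mul_integral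
      ((hU_meas l).mul (continuous_conj.comp_aestronglyMeasurable (hU_meas m)))
      ((hY l).integrable_mul (hY m).star).aestronglyMeasurable
    simp only [Function.comp_apply] at h
    rw [← h]
    congr with ω
    rw [map_mul]
    ring
  have hdiag (l : κ) : ((∫ ω, ‖Y l ω‖ ^ 2 ∂μ : ℝ) : ℂ) = ∫ ω, Y l ω * conj (Y l ω) ∂μ := by
    simp_rw [← integral_complex_ofReal, ofReal_pow, mul_conj']
  apply ofReal_injective
  push_cast
  rw [ofReal_integral_norm_sum_sq hUY_memLp, ofReal_integral_norm_sum_sq hY]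
  simp_rw [hsplit, integral_mul_conj_eq_of_pairwise_indepFun hU_norm hU_meas hU_indep hU_mean,
    add_mul, Finset.sum_add_distrib, mul_assoc, ← Finset.mul_sum, ite_mul, one_mul, zero_mul,
    Finset.sum_ite_eq, Finset.mem_univ, if_true, hdiag]

end SecondMoment

theorem hardening_bound_sinr_reformulation_general
    {Ω : Type*} [MeasurableSpace Ω] (μ : Measure Ω) [IsProbabilityMeasure μ]
    (α : ℝ) (hα : 0 < α) (L : ℕ) (θ : Fin L → Ω → ℝ)
    (hθ : ∀ l, AEMeasurable (θ l) μ)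
    (hindep : iIndepFun θ μ)
    (hmap : ∀ l, μ.map (θ l) = uniformIcc α)
    {ι : Type*} [Fintype ι]
    (X : Fin L → Ω → ℂ) (Y : ι → Fin L → Ω → ℂ)
    (hX : ∀ l, MemLp (X l) 2 μ) (hY : ∀ i l, MemLp (Y i l) 2 μ)
    (hindepXY : IndepFun (fun ω l => θ l ω)
      (fun ω => ((fun l => X l ω), (fun i l => Y i l ω))) μ)
    (σ2 : ℝ) :
    ‖∑ l, ∫ ω, Complex.exp ((θ l ω : ℂ) * Complex.I) * X l ω ∂μ‖ ^ 2
        / ((∑ i, ∫ ω, ‖∑ l, Complex.exp ((θ l ω : ℂ) * Complex.I) * Y i l ω‖ ^ 2 ∂μ)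
          - ‖∑ l, ∫ ω, Complex.exp ((θ l ω : ℂ) * Complex.I) * X l ω ∂μ‖ ^ 2 + σ2)
      = (Real.sin α / α) ^ 2 * ‖∑ l, ∫ ω, X l ω ∂μ‖ ^ 2
        / ((∑ i, ((Real.sin α / α) ^ 2 * ∫ ω, ‖∑ l, Y i l ω‖ ^ 2 ∂μ
              + (1 - (Real.sin α / α) ^ 2) * ∑ l, ∫ ω, ‖Y i l ω‖ ^ 2 ∂μ))
          - (Real.sin α / α) ^ 2 * ‖∑ l, ∫ ω, X l ω ∂μ‖ ^ 2 + σ2) := by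
  have hexp : Measurable fun t : ℝ => cexp (t * I) := by fun_prop
  have hU_meas (l : Fin L) : AEStronglyMeasurable (fun ω => cexp (θ l ω * I)) μ :=
    (hexp.comp_aemeasurable (hθ l)).aestronglyMeasurable
  have hU_mean (l : Fin L) : ∫ ω, cexp (θ l ω * I) ∂μ = ((Real.sin α / α : ℝ) : ℂ) := by
    rw [← integral_uniformIcc_exp_mul_I hα, ← hmap l,
      integral_map (hθ l) hexp.aestronglyMeasurable]
  have hU_indep : Pairwise fun l m => IndepFun (fun ω => cexp (θ l ω * I))
      (fun ω => cexp (θ m ω * I)) μ := fun l m hlm => (hindep.indepFun hlm).comp hexp hexp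
  have hUX (l : Fin L) : IndepFun (fun ω => cexp (θ l ω * I)) (X l) μ :=
    hindepXY.comp (φ := fun v : Fin L → ℝ => cexp (v l * I))
      (ψ := fun p : (Fin L → ℂ) × (ι → Fin L → ℂ) => p.1 l) (by fun_prop) (by fun_prop)
  have hUY (i : ι) : IndepFun (fun ω l => cexp (θ l ω * I)) (fun ω l => Y i l ω) μ :=
    hindepXY.comp (φ := fun (v : Fin L → ℝ) l => cexp (v l * I))
      (ψ := fun p : (Fin L → ℂ) × (ι → Fin L → ℂ) => p.2 i) (by fun_prop) (by fun_prop)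
  have hnum : ‖∑ l, ∫ ω, cexp (θ l ω * I) * X l ω ∂μ‖ ^ 2
      = (Real.sin α / α) ^ 2 * ‖∑ l, ∫ ω, X l ω ∂μ‖ ^ 2 := by
    simp_rw [(hUX _).integral_fun_mul_eq_mul_integral (hU_meas _) (hX _).1, hU_mean,
      ← Finset.mul_sum, norm_mul, mul_pow, norm_real, Real.norm_eq_abs, sq_abs]
  have hden (i : ι) := integral_norm_sum_mul_sq_of_indepFun (fun l ω => norm_exp_ofReal_mul_I _)
    hU_meas hU_indep hU_mean (hY i) (hUY i)
  simp only [norm_real, Real.norm_eq_abs, sq_abs] at hden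
  rw [hnum, Finset.sum_congr rfl fun i _ => hden i]

/-- Reformulation of the hardening-bound SINR (Eqs. (19)–(20) of the paper): with i.i.d.
phases `θ_l ~ U[-α, α]` independent of all effective channel coefficients `X_l`,
`Y_{i,l}`, and with `ν̃ = (sin α / α)²`,
`|Σ_l E[e^{iθ_l} X_l]|² / (Σ_i E[|Σ_l e^{iθ_l} Y_{i,l}|²] - |Σ_l E[e^{iθ_l} X_l]|² + σ²)`
equals
`ν̃ |Σ_l E[X_l]|² / (Σ_i (ν̃ E[|Σ_l Y_{i,l}|²] + (1-ν̃) Σ_l E[|Y_{i,l}|²]) - ν̃ |Σ_l E[X_l]|² + σ²)`,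
provided the denominators are nonzero. -/
theorem hardening_bound_sinr_reformulation
    {Ω : Type*} [MeasurableSpace Ω] (μ : Measure Ω) [IsProbabilityMeasure μ]
    (α : ℝ) (hα : 0 < α) (L : ℕ) (θ : Fin L → Ω → ℝ)
    (hθ : ∀ l, AEMeasurable (θ l) μ)
    (hindep : iIndepFun θ μ)
    (hmap : ∀ l, μ.map (θ l) = uniformIcc α)
    {ι : Type*} [Fintype ι]
    (X : Fin L → Ω → ℂ) (Y : ι → Fin L → Ω → ℂ)
    (hX : ∀ l, MemLp (X l) 2 μ) (hY : ∀ i l, MemLp (Y i l) 2 μ)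
    (hindepXY : IndepFun (fun ω l => θ l ω)
      (fun ω => ((fun l => X l ω), (fun i l => Y i l ω))) μ)
    (σ2 : ℝ) (hσ2 : 0 < σ2)
    (hden₁ : (∑ i, ∫ ω, ‖∑ l, Complex.exp ((θ l ω : ℂ) * Complex.I) * Y i l ω‖ ^ 2 ∂μ)
        - ‖∑ l, ∫ ω, Complex.exp ((θ l ω : ℂ) * Complex.I) * X l ω ∂μ‖ ^ 2 + σ2 ≠ 0)
    (hden₂ : (∑ i, ((Real.sin α / α) ^ 2 * ∫ ω, ‖∑ l, Y i l ω‖ ^ 2 ∂μ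
            + (1 - (Real.sin α / α) ^ 2) * ∑ l, ∫ ω, ‖Y i l ω‖ ^ 2 ∂μ))
        - (Real.sin α / α) ^ 2 * ‖∑ l, ∫ ω, X l ω ∂μ‖ ^ 2 + σ2 ≠ 0) :
    ‖∑ l, ∫ ω, Complex.exp ((θ l ω : ℂ) * Complex.I) * X l ω ∂μ‖ ^ 2
        / ((∑ i, ∫ ω, ‖∑ l, Complex.exp ((θ l ω : ℂ) * Complex.I) * Y i l ω‖ ^ 2 ∂μ)
          - ‖∑ l, ∫ ω, Complex.exp ((θ l ω : ℂ) * Complex.I) * X l ω ∂μ‖ ^ 2 + σ2)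
      = (Real.sin α / α) ^ 2 * ‖∑ l, ∫ ω, X l ω ∂μ‖ ^ 2
        / ((∑ i, ((Real.sin α / α) ^ 2 * ∫ ω, ‖∑ l, Y i l ω‖ ^ 2 ∂μ
              + (1 - (Real.sin α / α) ^ 2) * ∑ l, ∫ ω, ‖Y i l ω‖ ^ 2 ∂μ))
          - (Real.sin α / α) ^ 2 * ‖∑ l, ∫ ω, X l ω ∂μ‖ ^ 2 + σ2) :=
  hardening_bound_sinr_reformulation_general μ α hα L θ hθ hindep hmap X Y hX hY hindepXY σ2
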